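/- Let m,n be integers with 1<m<n, φ a parallel calibration of degree m on ℝⁿ, ψ = (∂_r ⌟ φ)|_{S^{n−1}}, and M a φ-submanifold of ℝⁿ∖{0}. Then ⟨T⃗M, d(s*ψ)⟩ = m r^{−m} |∂_r ∧ T⃗M|², where T⃗M is the unit simple m-vector field on M dual to its volume form, ⟨·,·⟩ is the pairing of m-vector fields with m-forms, s(a)=a/|a|, and r(a)=|a|. -/

import Mathlib

/- Common framework: parallel calibrations on ℝⁿ, oriented submanifolds (modelled as a set
together with a field of oriented orthonormal tangent frames, whose span is the tangent cone),
calibrated (φ-)submanifolds, the sphere form ψ = (∂_r ⌟ φ)|_{S^{n-1}}, cones over subsets of the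
sphere, cylindrical norms of normal vector fields, graphs G(ν), and exterior derivatives. -/

open MeasureTheory Set Metric
open scoped RealInnerProductSpace ENNReal

noncomputable section

/-- Euclidean space ℝⁿ. -/
abbrev E (n : ℕ) := EuclideanSpace ℝ (Fin n)

/-- `φ` has comass ≤ 1: `φ(v₁,…,v_m) ≤ 1` for all orthonormal `v₁,…,v_m`.  A *parallel
calibration* of degree `m` on ℝⁿ is (identified with) a constant-coefficient alternating
`m`-form of comass ≤ 1 (constant forms are automatically closed). -/
def ComassLeOne {n m : ℕ} (φ : AlternatingMap ℝ (E n) ℝ (Fin m)) : Prop :=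
  ∀ v : Fin m → E n, Orthonormal ℝ v → φ v ≤ 1

/-- Insert `x` in front of the `(m-1)`-tuple `v`, producing an `m`-tuple. -/
def minsert {n m : ℕ} (x : E n) (v : Fin (m - 1) → E n) : Fin m → E n :=
  fun i => if h : (i : ℕ) = 0 then x else v ⟨(i : ℕ) - 1, by have := i.isLt; omega⟩

/-- `M` is a `k`-dimensional oriented submanifold of ℝⁿ, with oriented orthonormal tangent
frame field `τ`: at every point of `M` the frame is orthonormal and spans the tangent space
(tangent cone) of `M`. -/
def IsOrientedSubmanifold {n : ℕ} (k : ℕ) (M : Set (E n)) (τ : E n → Fin k → E n) : Prop :=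
  (∀ x ∈ M, Orthonormal ℝ (τ x)) ∧
  (∀ x ∈ M, tangentConeAt ℝ M x = (Submodule.span ℝ (Set.range (τ x)) : Set (E n)))

/-- `M` (with frame `σ`) is a φ-submanifold contained in `U`: an `m`-dimensional oriented
submanifold on which `φ` restricts to the volume form, i.e. `φ = 1` on oriented orthonormal
tangent frames. -/
def IsPhiSubmanifoldOf {n m : ℕ} (φ : AlternatingMap ℝ (E n) ℝ (Fin m))
    (M : Set (E n)) (σ : E n → Fin m → E n) (U : Set (E n)) : Prop :=
  M ⊆ U ∧ IsOrientedSubmanifold m M σ ∧ ∀ x ∈ M, φ (σ x) = 1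

/-- `X` (with frame `τ`) is a ψ-submanifold of the unit sphere, where
`ψ = (∂_r ⌟ φ)|_{S^{n-1}}`:  at `x ∈ S^{n-1}` one has `ψ_x(v₁,…,v_{m-1}) = φ(x,v₁,…,v_{m-1})`
(the radial unit vector at `x` is `x` itself). -/
def IsPsiSubmanifold {n m : ℕ} (φ : AlternatingMap ℝ (E n) ℝ (Fin m))
    (X : Set (E n)) (τ : E n → Fin (m - 1) → E n) : Prop :=
  X ⊆ sphere (0 : E n) 1 ∧ IsOrientedSubmanifold (m - 1) X τ ∧
    ∀ x ∈ X, φ (minsert x (τ x)) = 1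

/-- The cone `A(b₀,b₁;X)`: preimage of `(b₀,b₁) × X` under polar coordinates. -/
def coneA {n : ℕ} (b₀ b₁ : ℝ) (X : Set (E n)) : Set (E n) :=
  {a | b₀ < ‖a‖ ∧ ‖a‖ < b₁ ∧ ‖a‖⁻¹ • a ∈ X}

/-- The oriented orthonormal frame of the cone `A(b₀,b₁;X)` induced by a frame `τ` of `X`:
the radial unit vector followed by the frame of `X` at the radial projection. -/
def coneFrame {n m : ℕ} (τ : E n → Fin (m - 1) → E n) : E n → Fin m → E n :=
  fun a => minsert (‖a‖⁻¹ • a) (τ (‖a‖⁻¹ • a))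

/-- The radial projection `s(a) = a/|a|`. -/
def sphProj {n : ℕ} (a : E n) : E n := ‖a‖⁻¹ • a

/-- The pullback `s*ψ` of `ψ = (∂_r ⌟ φ)|_{S^{n-1}}` under the radial projection `s`,
as an `(m-1)`-form on `ℝⁿ∖{0}`:
`(s*ψ)_a(v₁,…,v_{m-1}) = ψ_{s(a)}(ds_a v₁, …, ds_a v_{m-1})`. -/
def pullPsi {n m : ℕ} (φ : AlternatingMap ℝ (E n) ℝ (Fin m)) (a : E n)
    (v : Fin (m - 1) → E n) : ℝ :=
  φ (minsert (sphProj a) (fun j => fderiv ℝ (sphProj (n := n)) a (v j)))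

/-- Exterior derivative of a `k`-form `ω` (given as a function of the point and of `k`
constant vectors) on ℝⁿ:
`dω_a(v₀,…,v_k) = Σᵢ (-1)ⁱ ∂_{vᵢ}[ω_y(v₀,…,v̂ᵢ,…,v_k)]|_{y=a}`. -/
def extD {n k : ℕ} (ω : E n → (Fin k → E n) → ℝ) (a : E n) (v : Fin (k + 1) → E n) : ℝ :=
  ∑ i : Fin (k + 1),
    (-1 : ℝ) ^ (i : ℕ) * fderiv ℝ (fun y => ω y (fun j => v (i.succAbove j))) a (v i)

/-- `ν` is a field normal to the submanifold with frame `σ` along `A`. -/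
def IsNormalField {n m : ℕ} (A : Set (E n)) (σ : E n → Fin m → E n) (ν : E n → E n) : Prop :=
  ∀ a ∈ A, ∀ i, ⟪ν a, σ a i⟫ = 0

/-- `‖ν‖_{C⁰_cyl} ≤ ε` on `A` : `sup |ν|/r ≤ ε` (cylindrical metric `dr²/r² + ds²`). -/
def cylC0Le {n : ℕ} (A : Set (E n)) (ν : E n → E n) (ε : ℝ) : Prop :=
  ∀ a ∈ A, ‖ν a‖ / ‖a‖ ≤ ε

/-- `‖ν‖_{C¹_cyl} ≤ ε` on `A` : `sup (|ν|/r + |Dν|) ≤ ε` (cylindrical metric). -/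
def cylC1Le {n : ℕ} (A : Set (E n)) (ν : E n → E n) (ε : ℝ) : Prop :=
  ∀ a ∈ A, ‖ν a‖ / ‖a‖ + ‖fderiv ℝ ν a‖ ≤ ε

/-- A cylindrical distance on ℝⁿ∖{0} inducing the metric `dr²/r² + ds²`. -/
def dCyl {n : ℕ} (a b : E n) : ℝ :=
  dist (sphProj a) (sphProj b) + |Real.log ‖a‖ - Real.log ‖b‖|

/-- `‖ν‖_{C^{1,1/2}_cyl} ≤ ε` on `A` : the `C¹` bound together with a 1/2-Hölder bound on the
derivative, with respect to the cylindrical metric. -/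
def cylC1HalfLe {n : ℕ} (A : Set (E n)) (ν : E n → E n) (ε : ℝ) : Prop :=
  cylC1Le A ν ε ∧
  ∀ a ∈ A, ∀ b ∈ A, ‖fderiv ℝ ν a - fderiv ℝ ν b‖ ≤ ε * dCyl a b ^ ((1 : ℝ) / 2)

/-- The graph map `a ↦ (|a|/√(|a|²+|ν(a)|²))(a + ν(a))`. -/
def graphMap {n : ℕ} (ν : E n → E n) (a : E n) : E n :=
  (‖a‖ / Real.sqrt (‖a‖ ^ 2 + ‖ν a‖ ^ 2)) • (a + ν a)

/-- `G(ν)`, the graph of the normal field `ν` over `A`. -/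
def graphSet {n : ℕ} (ν : E n → E n) (A : Set (E n)) : Set (E n) := graphMap ν '' A

/-- `M` is closed in the (open) set `U`. -/
def IsClosedIn {n : ℕ} (M U : Set (E n)) : Prop := closure M ∩ U ⊆ M

/-!
Away from the origin, `ds_y = ‖y‖⁻¹ (1 - s ⊗ s)` with `s = y / ‖y‖`, and the radial parts of the
arguments die against the first slot `s`, so `(s*ψ)_y(w) = ‖y‖^{1-m} φ(s, w)`. Differentiating
this closed form, the `i`-th term of `d(s*ψ)` on a frame `v` with `φ(v) = 1` is
`‖a‖^{-m} (φ(v) - m ⟨s, vᵢ⟩ φ(v with vᵢ replaced by s))`. As `φ` has comass `≤ 1`, the calibrated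
frame `v` maximises `φ` among orthonormal frames, so the first variation vanishes:
`φ(v with vᵢ replaced by y) = ⟨vᵢ, y⟩` for every `y`. Summing over `i` gives
`m ‖a‖^{-m} (1 - Σᵢ ⟨s, vᵢ⟩²)`.
-/

section

variable {F : Type*} [NormedAddCommGroup F] [InnerProductSpace ℝ F]

theorem hasFDerivAt_norm_of_ne_zero {a : F} (ha : a ≠ 0) :
    HasFDerivAt (‖·‖) (‖a‖⁻¹ • innerSL ℝ a) a := by
  have hsq := ((hasFDerivAt_id a).norm_sq).sqrt (by simpa using ha)
  simp only [id, Real.sqrt_sq (norm_nonneg _)] at hsq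
  refine hsq.congr_fderiv ?_
  ext v
  simp only [one_div, mul_inv_rev, ContinuousLinearMap.comp_id, smul_apply, coe_innerSL_apply,
    nsmul_eq_mul, Nat.cast_ofNat, smul_eq_mul]
  field_simp

theorem hasFDerivAt_norm_inv {a : F} (ha : a ≠ 0) :
    HasFDerivAt (fun y : F => ‖y‖⁻¹) (-(‖a‖ ^ 3)⁻¹ • innerSL ℝ a) a := by
  refine ((hasDerivAt_inv (norm_ne_zero_iff.2 ha)).comp_hasFDerivAt a
    (hasFDerivAt_norm_of_ne_zero ha)).congr_fderiv ?_
  rw [smul_smul]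
  congr 1
  ring

end

theorem hasFDerivAt_sphProj {n : ℕ} {a : E n} (ha : a ≠ 0) :
    HasFDerivAt sphProj
      (‖a‖⁻¹ • (ContinuousLinearMap.id ℝ (E n) - (innerSL ℝ (sphProj a)).smulRight (sphProj a)))
      a := by
  refine ((hasFDerivAt_norm_inv ha).smul (hasFDerivAt_id a)).congr_fderiv ?_
  refine ContinuousLinearMap.ext fun v => ?_
  simp only [sphProj, add_apply, smul_apply, sub_apply, ContinuousLinearMap.smulRight_apply,
    innerSL_apply_apply, ContinuousLinearMap.id_apply, id_eq, smul_eq_mul, real_inner_smul_left,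
    smul_sub, smul_smul]
  module

theorem fderiv_sphProj_apply {n : ℕ} {a : E n} (ha : a ≠ 0) (v : E n) :
    fderiv ℝ sphProj a v = ‖a‖⁻¹ • (v - ⟪sphProj a, v⟫ • sphProj a) := by
  simp [(hasFDerivAt_sphProj ha).fderiv]

namespace AlternatingMap

variable {R M N : Type*} [CommRing R] [AddCommGroup M] [Module R M] [AddCommGroup N] [Module R N]
  {k : ℕ}

theorem map_cons_add_smul_self (f : M [⋀^Fin (k + 1)]→ₗ[R] N) (x : M) (w : Fin k → M)
    (d : Fin k → R) : f (Fin.cons x fun j => w j + d j • x) = f (Fin.cons x w) := by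
  classical
  have hx : ∀ (u : Fin k → M) (j : Fin k), f.curryLeft x (Function.update u j x) = 0 := by
    intro u j
    rw [curryLeft_apply_apply, Matrix.vecCons, Fin.cons_update]
    exact f.map_eq_zero_of_eq (i := 0) (j := j.succ) _
      (by simp [Function.update_of_ne (Fin.succ_ne_zero j).symm]) (Fin.succ_ne_zero j).symm
  change f.curryLeft x (w + fun j => d j • x) = f.curryLeft x w
  rw [map_add_univ, Finset.sum_eq_single Finset.univ]
  · simp
  · intro S _ hS
    obtain ⟨j, -, hj⟩ := Finset.exists_of_ssubset (Finset.ssubset_univ_iff.2 hS)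
    rw [← Function.update_eq_self j (S.piecewise _ _), Finset.piecewise_eq_of_notMem _ _ _ hj,
      map_update_smul, hx, smul_zero]
  · simp

theorem map_cons_smul_tail (f : M [⋀^Fin (k + 1)]→ₗ[R] N) (x : M) (c : R) (w : Fin k → M) :
    f (Fin.cons x fun j => c • w j) = c ^ k • f (Fin.cons x w) := by
  simpa [Matrix.vecCons] using (f.curryLeft x).map_smul_univ (fun _ => c) w

theorem map_cons_removeNth (f : M [⋀^Fin (k + 1)]→ₗ[R] N) (i : Fin (k + 1)) (x : M)
    (v : Fin (k + 1) → M) :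
    f (Fin.cons x (i.removeNth v)) = (-1) ^ (i : ℕ) • f (Function.update v i x) := by
  rw [← Fin.insertNth_removeNth]
  exact (f.neg_one_pow_smul_map_insertNth i x _).symm

end AlternatingMap

section Orthonormal

variable {F ι : Type*} [NormedAddCommGroup F] [InnerProductSpace ℝ F] [DecidableEq ι]

theorem Orthonormal.update {v : ι → F} {i : ι} (hv : Orthonormal ℝ v) {u : F} (hu : ‖u‖ = 1)
    (huv : ∀ j ≠ i, ⟪v j, u⟫ = 0) : Orthonormal ℝ (Function.update v i u) := by
  refine ⟨fun j => ?_, fun j l hjl => ?_⟩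
  · rcases eq_or_ne j i with rfl | hj
    · simpa using hu
    · simpa [hj] using hv.1 j
  · rcases eq_or_ne j i with rfl | hj
    · rw [Function.update_self, Function.update_of_ne hjl.symm, real_inner_comm]
      exact huv l hjl.symm
    rcases eq_or_ne l i with rfl | hl
    · rw [Function.update_self, Function.update_of_ne hjl]
      exact huv j hjl
    · rw [Function.update_of_ne hj, Function.update_of_ne hl]
      exact hv.2 hjl

end Orthonormal

namespace AlternatingMap

variable {F ι : Type*} [NormedAddCommGroup F] [InnerProductSpace ℝ F] [DecidableEq ι]
  {f : F [⋀^ι]→ₗ[ℝ] ℝ} {v : ι → F}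

theorem map_update_le_norm (hf : ∀ w, Orthonormal ℝ w → f w ≤ 1) (hv : Orthonormal ℝ v)
    {i : ι} {y : F} (hy : ∀ j ≠ i, ⟪v j, y⟫ = 0) : f (Function.update v i y) ≤ ‖y‖ := by
  rcases eq_or_ne y 0 with rfl | hy0
  · simp
  have hny : 0 < ‖y‖ := norm_pos_iff.2 hy0
  have hunit := hf _ (hv.update (u := ‖y‖⁻¹ • y) (by simp [norm_smul, hny.ne'])
    fun j hj => by rw [real_inner_smul_right, hy j hj, mul_zero])
  rw [map_update_smul, smul_eq_mul] at hunit
  rwa [inv_mul_le_iff₀ hny, mul_one] at hunit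

theorem map_update_eq_zero_of_calibrated (hf : ∀ w, Orthonormal ℝ w → f w ≤ 1)
    (hv : Orthonormal ℝ v) (hfv : f v = 1) (i : ι) {x : F} (hx : ∀ j, ⟪v j, x⟫ = 0) :
    f (Function.update v i x) = 0 := by
  set c := f (Function.update v i x)
  have hperp : ∀ j ≠ i, ⟪v j, ‖x‖ ^ 2 • v i + c • x⟫ = 0 := fun j hj => by
    rw [inner_add_right, real_inner_smul_right, real_inner_smul_right, hv.inner_eq_zero hj, hx j]
    ring
  have hle := map_update_le_norm hf hv hperp
  have hval : f (Function.update v i (‖x‖ ^ 2 • v i + c • x)) = ‖x‖ ^ 2 + c ^ 2 := by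
    rw [map_update_add, map_update_smul, map_update_smul, Function.update_eq_self, hfv]
    simp only [smul_eq_mul, c]
    ring
  have hnorm : ‖‖x‖ ^ 2 • v i + c • x‖ ^ 2 = ‖x‖ ^ 2 * (‖x‖ ^ 2 + c ^ 2) := by
    rw [norm_add_sq_real, norm_smul, norm_smul, real_inner_smul_left, real_inner_smul_right,
      hx i, hv.1 i]
    simp only [norm_pow, Real.norm_eq_abs, mul_pow, sq_abs, mul_one, mul_zero, add_zero]
    ring
  rw [hval] at hle
  have hsq : (‖x‖ ^ 2 + c ^ 2) ^ 2 ≤ ‖x‖ ^ 2 * (‖x‖ ^ 2 + c ^ 2) :=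
    hnorm ▸ pow_le_pow_left₀ (by positivity) hle 2
  have hc : c ^ 2 * c ^ 2 ≤ 0 := by nlinarith [sq_nonneg c, sq_nonneg ‖x‖]
  exact pow_eq_zero_iff two_ne_zero |>.1 (mul_self_eq_zero.1 (le_antisymm hc (mul_self_nonneg _)))

theorem map_update_eq_inner_of_calibrated [Fintype ι] (hf : ∀ w, Orthonormal ℝ w → f w ≤ 1)
    (hv : Orthonormal ℝ v) (hfv : f v = 1) (i : ι) (y : F) :
    f (Function.update v i y) = ⟪v i, y⟫ := by
  set x := y - ∑ j, ⟪v j, y⟫ • v j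
  have hx : ∀ j, ⟪v j, x⟫ = 0 := fun j => by
    rw [inner_sub_right, hv.inner_right_fintype, sub_self]
  have hy : y = ∑ j, ⟪v j, y⟫ • v j + x := (add_sub_cancel _ y).symm
  have hbasis : ∀ j, f (Function.update v i (v j)) = if j = i then 1 else 0 := fun j => by
    split_ifs with hji
    · rw [hji, Function.update_eq_self, hfv]
    · exact f.map_update_self v (Ne.symm hji)
  rw [hy, map_update_add, map_update_sum, map_update_eq_zero_of_calibrated hf hv hfv i hx]
  simp [map_update_smul, hbasis, inner_add_right, hx i, hv.inner_right_fintype]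

end AlternatingMap

section PullbackPsi

variable {n k : ℕ}

theorem minsert_eq_cons (x : E n) (w : Fin k → E n) : minsert (m := k + 1) x w = Fin.cons x w := by
  funext i
  induction i using Fin.cases <;> simp [minsert]

theorem pullPsi_eq (φ : AlternatingMap ℝ (E n) ℝ (Fin (k + 1))) {y : E n} (hy : y ≠ 0)
    (w : Fin k → E n) : pullPsi φ y w = ‖y‖⁻¹ ^ k * φ (Fin.cons (sphProj y) w) := by
  simp only [pullPsi, fderiv_sphProj_apply hy, minsert_eq_cons, sub_eq_add_neg, ← neg_smul]
  exact (φ.map_cons_smul_tail _ _ _).trans (congrArg _ (φ.map_cons_add_smul_self _ _ _))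

theorem fderiv_pullPsi_apply (φ : AlternatingMap ℝ (E n) ℝ (Fin (k + 1))) {a : E n} (ha : a ≠ 0)
    (w : Fin k → E n) (b : E n) :
    fderiv ℝ (fun y => pullPsi φ y w) a b = ‖a‖⁻¹ ^ (k + 1) *
      (φ (Fin.cons b w) - (k + 1) * ⟪sphProj a, b⟫ * φ (Fin.cons (sphProj a) w)) := by
  let L : E n →L[ℝ] ℝ := LinearMap.toContinuousLinearMap
    (φ.toMultilinearMap.toLinearMap (Fin.cons 0 w) 0)
  have hL : ∀ x, L x = φ (Fin.cons x w) := fun x => by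
    simp [L, Fin.update_cons_zero]
  have hclosed : (fun y => pullPsi φ y w) =ᶠ[nhds a] fun y => ‖y‖⁻¹ ^ k * L (sphProj y) :=
    Filter.eventually_of_mem (isOpen_ne.mem_nhds ha) fun y hy =>
      (pullPsi_eq φ hy w).trans (congrArg _ (hL _).symm)
  have hderiv : HasFDerivAt (fun y => ‖y‖⁻¹ ^ k * L (sphProj y)) _ a :=
    ((hasFDerivAt_norm_inv ha).pow k).mul (L.hasFDerivAt.comp a (hasFDerivAt_sphProj ha))
  rw [hclosed.fderiv_eq, hderiv.fderiv]
  simp only [add_apply, smul_apply, ContinuousLinearMap.comp_apply, sub_apply,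
    ContinuousLinearMap.smulRight_apply, innerSL_apply_apply, ContinuousLinearMap.id_apply,
    map_smul, map_sub, smul_eq_mul]
  simp only [hL]
  have hr : ‖a‖ ≠ 0 := norm_ne_zero_iff.2 ha
  have hab : ⟪a, b⟫ = ‖a‖ * ⟪sphProj a, b⟫ := by
    rw [sphProj, real_inner_smul_left, mul_inv_cancel_left₀ hr]
  rw [hab]
  rcases k with _ | j
  · simp
  · simp only [nsmul_eq_mul, add_tsub_cancel_right, pow_succ, Nat.cast_succ]
    field_simp
    ring

end PullbackPsi

theorem extD_pullPsi_of_calibrated {n m : ℕ} (hm : 0 < m) (φ : AlternatingMap ℝ (E n) ℝ (Fin m))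
    (hφ : ComassLeOne φ) {v : Fin m → E n} (hv : Orthonormal ℝ v) (hφv : φ v = 1) {a : E n}
    (ha : a ≠ 0) :
    extD (pullPsi φ) a (fun i => v (Fin.cast (Nat.succ_pred_eq_of_pos hm) i)) =
      m * (‖a‖ ^ m)⁻¹ * (1 - ∑ i, ⟪sphProj a, v i⟫ ^ 2) := by
  obtain ⟨k, rfl⟩ : ∃ k, m = k + 1 := ⟨m - 1, by omega⟩
  have hterm : ∀ i : Fin (k + 1),
      (-1) ^ (i : ℕ) * fderiv ℝ (fun y => pullPsi φ y (i.removeNth v)) a (v i) =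
        ‖a‖⁻¹ ^ (k + 1) * (1 - (k + 1) * ⟪sphProj a, v i⟫ ^ 2) := by
    intro i
    rw [fderiv_pullPsi_apply φ ha, φ.map_cons_removeNth, φ.map_cons_removeNth,
      Function.update_eq_self, hφv, AlternatingMap.map_update_eq_inner_of_calibrated hφ hv hφv,
      real_inner_comm (sphProj a)]
    have hsign : ((-1 : ℝ) ^ (i : ℕ)) ^ 2 = 1 := by
      rw [← pow_mul, mul_comm, pow_mul, neg_one_sq, one_pow]
    linear_combination ‖a‖⁻¹ ^ (k + 1) * (1 - (k + 1) * ⟪sphProj a, v i⟫ ^ 2) * hsign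
  change ∑ i : Fin (k + 1),
    (-1) ^ (i : ℕ) * fderiv ℝ (fun y => pullPsi φ y (i.removeNth v)) a (v i) = _
  rw [Finset.sum_congr rfl fun i _ => hterm i, ← Finset.mul_sum, Finset.sum_sub_distrib,
    ← Finset.mul_sum]
  simp only [inv_pow, Finset.sum_const, Finset.card_univ, Fintype.card_fin, nsmul_eq_mul,
    Nat.cast_add, Nat.cast_one, mul_one]
  ring

/-- **Proposition 3.4, Harvey–Lawson.**  Let `1 < m < n`, `φ` a parallel
calibration of degree `m` on ℝⁿ, `ψ = (∂_r ⌟ φ)|_{S^{n-1}}` and `M` a φ-submanifold of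
`ℝⁿ∖{0}` (with frame `σ`).  Then `⟨T⃗M, d(s*ψ)⟩ = m r^{-m} |∂_r ∧ T⃗M|²`, where the left-hand
side is the exterior derivative of `s*ψ` evaluated on the oriented orthonormal frame of `M`,
and `|∂_r ∧ T⃗M|² = 1 - Σᵢ ⟨∂_r, τᵢ⟩²` is the squared norm of the component of `∂_r` normal
to `M`. -/
theorem pairing_extDeriv_pullback_psi {n m : ℕ} (hm : 1 < m)
    (φ : AlternatingMap ℝ (E n) ℝ (Fin m)) (hφ : ComassLeOne φ)
    (M : Set (E n)) (σ : E n → Fin m → E n)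
    (hM : IsPhiSubmanifoldOf φ M σ {a : E n | a ≠ 0}) :
    ∀ a ∈ M,
      extD (pullPsi φ) a
          (fun i => σ a (Fin.cast (Nat.succ_pred_eq_of_pos (by omega : 0 < m)) i)) =
        (m : ℝ) * (‖a‖ ^ m)⁻¹ * (1 - ∑ i, ⟪sphProj a, σ a i⟫ ^ 2) := by
  obtain ⟨hMU, ⟨hframe, -⟩, hcal⟩ := hM
  intro a haM
  exact extD_pullPsi_of_calibrated (by omega) φ hφ (hframe a haM) (hcal a haM) (hMU haM)
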